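/- Let G be a gyrogroup with a gyronorm and gyronorm metric d(x,y) = ‖⊖x ⊕ y‖, and suppose the right-gyrotranslation inequality d(x ⊕ a, y ⊕ a) ≤ d(x, y) holds for all a, x, y ∈ G (equivalently, Klee's condition holds). Then, with respect to the topology induced by d, the gyroaddition map (x, y) ↦ x ⊕ y is continuous from G × G to G, and the inversion map x ↦ ⊖x is an isometry of (G, d) (in particular continuous); hence G is a topological gyrogroup. -/

import Mathlib

structure Gyrogroup (G : Type*) where
  add : G → G → G
  e : G
  neg : G → G
  gyr : G → G → G → G
  e_add : ∀ a, add e a = a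
  add_e : ∀ a, add a e = a
  neg_add : ∀ a, add (neg a) a = e
  add_neg : ∀ a, add a (neg a) = e
  gyr_bijective : ∀ a b, Function.Bijective (gyr a b)
  gyr_add : ∀ a b x y, gyr a b (add x y) = add (gyr a b x) (gyr a b y)
  left_gyroassoc : ∀ a b c, add a (add b c) = add (add a b) (gyr a b c)
  left_loop : ∀ a b, gyr (add a b) b = gyr a b

structure Gyronorm {G : Type*} (gg : Gyrogroup G) where
  toFun : G → ℝ
  nonneg : ∀ x, 0 ≤ toFun x
  eq_zero_iff : ∀ x, toFun x = 0 ↔ x = gg.e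
  neg_eq : ∀ x, toFun (gg.neg x) = toFun x
  subadd : ∀ x y, toFun (gg.add x y) ≤ toFun x + toFun y
  gyr_eq : ∀ a b x, toFun (gg.gyr a b x) = toFun x

/-!
Left gyrotranslations are isometries of the gyronorm metric, because
`⊖(x ⊕ y) ⊕ (x ⊕ b) = gyr[x, y](⊖y ⊕ b)` and gyrations preserve the gyronorm; the triangle
inequality comes the same way from left gyroassociativity. With the right-gyrotranslation
inequality this gives `d(x ⊕ y, a ⊕ b) ≤ d(x ⊕ y, x ⊕ b) + d(x ⊕ b, a ⊕ b) ≤ d(y, b) + d(x, a)`.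
For inversion, `d(⊖x, ⊖y) = ‖x ⊕ ⊖y‖ = d(x ⊕ ⊖y, y ⊕ ⊖y) ≤ d(x, y)`, and applying this to
`⊖x, ⊖y` gives the reverse inequality.
-/

namespace Gyrogroup

variable {G : Type*} (gg : Gyrogroup G)

theorem gyr_injective (a b : G) : Function.Injective (gg.gyr a b) :=
  (gg.gyr_bijective a b).1

theorem neg_add_add_eq_gyr (a z : G) :
    gg.add (gg.neg a) (gg.add a z) = gg.gyr (gg.neg a) a z := by
  rw [gg.left_gyroassoc, gg.neg_add, gg.e_add]

theorem gyr_e_left (a c : G) : gg.gyr gg.e a c = c := by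
  have h : gg.add a (gg.gyr gg.e a c) = gg.add a c := by
    rw [← gg.e_add (gg.add a c), gg.left_gyroassoc, gg.e_add]
  apply gg.gyr_injective (gg.neg a) a
  rw [← neg_add_add_eq_gyr, ← neg_add_add_eq_gyr, h]

theorem gyr_neg_self (a c : G) : gg.gyr (gg.neg a) a c = c := by
  rw [← gg.left_loop, gg.neg_add, gyr_e_left]

theorem gyr_self_neg (a c : G) : gg.gyr a (gg.neg a) c = c := by
  rw [← gg.left_loop, gg.add_neg, gyr_e_left]

theorem neg_add_cancel_left (a x : G) : gg.add (gg.neg a) (gg.add a x) = x := by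
  rw [neg_add_add_eq_gyr, gyr_neg_self]

theorem add_neg_cancel_left (a x : G) : gg.add a (gg.add (gg.neg a) x) = x := by
  rw [gg.left_gyroassoc, gg.add_neg, gg.e_add, gyr_self_neg]

theorem neg_neg (a : G) : gg.neg (gg.neg a) = a := by
  simpa only [gg.neg_add, gg.add_e] using gg.neg_add_cancel_left (gg.neg a) a

theorem neg_add_add_left (x y b : G) :
    gg.add (gg.neg (gg.add x y)) (gg.add x b) = gg.gyr x y (gg.add (gg.neg y) b) := by
  rw [← gg.neg_add_cancel_left (gg.add x y) (gg.gyr x y _), ← gg.left_gyroassoc,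
    add_neg_cancel_left]

end Gyrogroup

namespace Gyronorm

variable {G : Type*} {gg : Gyrogroup G} (nm : Gyronorm gg)

def dist (x y : G) : ℝ :=
  nm.toFun (gg.add (gg.neg x) y)

theorem dist_triangle (u v w : G) : nm.dist u w ≤ nm.dist u v + nm.dist v w := by
  have h : gg.add (gg.neg u) w
      = gg.add (gg.add (gg.neg u) v) (gg.gyr (gg.neg u) v (gg.add (gg.neg v) w)) := by
    rw [← gg.left_gyroassoc, gg.add_neg_cancel_left]
  calc nm.dist u w
      ≤ nm.toFun (gg.add (gg.neg u) v)
        + nm.toFun (gg.gyr (gg.neg u) v (gg.add (gg.neg v) w)) := by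
        rw [dist, h]; exact nm.subadd _ _
    _ = nm.dist u v + nm.dist v w := by rw [nm.gyr_eq]; rfl

theorem dist_add_left (x y b : G) : nm.dist (gg.add x y) (gg.add x b) = nm.dist y b := by
  rw [dist, dist, gg.neg_add_add_left, nm.gyr_eq]

theorem dist_neg_neg_eq_dist_e (x y : G) :
    nm.dist (gg.neg x) (gg.neg y) = nm.dist (gg.add x (gg.neg y)) gg.e := by
  rw [dist, dist, gg.neg_neg, gg.add_e, nm.neg_eq]

def RightGyrotranslationNonexpansive : Prop :=
  ∀ a x y, nm.dist (gg.add x a) (gg.add y a) ≤ nm.dist x y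

variable {nm}

theorem dist_add_add_le (hright : nm.RightGyrotranslationNonexpansive) (x y a b : G) :
    nm.dist (gg.add x y) (gg.add a b) ≤ nm.dist x a + nm.dist y b :=
  calc nm.dist (gg.add x y) (gg.add a b)
      ≤ nm.dist (gg.add x y) (gg.add x b) + nm.dist (gg.add x b) (gg.add a b) :=
        nm.dist_triangle _ _ _
    _ ≤ nm.dist y b + nm.dist x a := by rw [dist_add_left]; gcongr; exact hright b x a
    _ = nm.dist x a + nm.dist y b := add_comm _ _

theorem dist_neg_neg_le (hright : nm.RightGyrotranslationNonexpansive) (x y : G) :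
    nm.dist (gg.neg x) (gg.neg y) ≤ nm.dist x y := by
  simpa only [nm.dist_neg_neg_eq_dist_e, gg.add_neg] using hright (gg.neg y) x y

theorem dist_neg_neg (hright : nm.RightGyrotranslationNonexpansive) (x y : G) :
    nm.dist (gg.neg x) (gg.neg y) = nm.dist x y := by
  refine le_antisymm (dist_neg_neg_le hright x y) ?_
  simpa only [gg.neg_neg] using dist_neg_neg_le hright (gg.neg x) (gg.neg y)

end Gyronorm

/-- If the right-gyrotranslation inequality holds in a normed gyrogroup, then with
respect to the gyronorm metric the gyroaddition is (jointly) continuous, expressed in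
ε–δ form for the product of the metric topologies, and the inversion map is an
isometry (in particular continuous); hence `G` is a topological gyrogroup. -/
theorem normed_gyrogroup_topological {G : Type*} (gg : Gyrogroup G) (nm : Gyronorm gg)
    (d : G → G → ℝ) (hd : ∀ x y, d x y = nm.toFun (gg.add (gg.neg x) y))
    (hright : ∀ a x y, d (gg.add x a) (gg.add y a) ≤ d x y) :
    (∀ x y : G, ∀ ε > (0 : ℝ), ∃ δ > (0 : ℝ), ∀ a b : G,
        d x a < δ → d y b < δ → d (gg.add x y) (gg.add a b) < ε) ∧
    (∀ x y : G, d (gg.neg x) (gg.neg y) = d x y) := by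
  obtain rfl : d = nm.dist := funext fun x => funext (hd x)
  refine ⟨fun x y ε hε => ⟨ε / 2, half_pos hε, fun a b ha hb => ?_⟩,
    Gyronorm.dist_neg_neg hright⟩
  calc nm.dist (gg.add x y) (gg.add a b) ≤ nm.dist x a + nm.dist y b :=
        Gyronorm.dist_add_add_le hright x y a b
    _ < ε := by linarith
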